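/- Let θ be an automorphism of a finite ring R of finite order, and let C be a θ-skew cyclic code of length n over R (invariant under the skew cyclic shift σ_θ(c₀,…,c_{n−1}) = (θ(c_{n−1}),θ(c₀),…,θ(c_{n−2}))). Set r = gcd(n, ord(θ)). If r = 1 then C is a (classical) cyclic code of length n over R; if r > 1, writing n = m·r, C is a quasi-cyclic code of index m, i.e., C is invariant under the shift by r positions (θ-free quasi-cyclic shift on blocks of length r). -/

import Mathlib

/-!
Iterating the skew shift `k` times shifts the coordinates by `k` and applies `θ ^ k`. By the
Chinese remainder theorem there is a `k` with `k ≡ gcd n (ord θ) [MOD n]` and `k ≡ 0 [MOD ord θ]`,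
so `θ ^ k = 1` and `σ_θ^k` is the plain shift by `gcd n (ord θ)` positions.
-/

section SkewShift

open Fin.NatCast

variable {R : Type*} [Mul R] [Add R] {n : ℕ} [NeZero n]

def skewShift (θ : RingAut R) (c : Fin n → R) : Fin n → R :=
  fun i => θ (c (i - 1))

theorem skewShift_iterate (θ : RingAut R) (k : ℕ) (c : Fin n → R) :
    (skewShift θ)^[k] c = fun i => (θ ^ k) (c (i - k)) := by
  induction k with
  | zero => simp
  | succ k ih =>
    funext i
    rw [Function.iterate_succ_apply', ih, skewShift, pow_succ', Nat.cast_succ, add_comm,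
      ← sub_sub]
    rfl

theorem skewShift_iterate_of_pow_eq_one {θ : RingAut R} {k : ℕ} (hθ : θ ^ k = 1)
    (c : Fin n → R) : (skewShift θ)^[k] c = fun i => c (i - k) := by
  simp [skewShift_iterate, hθ]

theorem Fin.natCast_eq_natCast_of_modEq {a b : ℕ} (h : a ≡ b [MOD n]) :
    (a : Fin n) = (b : Fin n) :=
  Fin.ext (by rw [Fin.val_natCast, Fin.val_natCast]; exact h)

theorem mapsTo_shift_gcd_orderOf_of_mapsTo_skewShift {θ : RingAut R} {C : Set (Fin n → R)}
    (hC : Set.MapsTo (skewShift θ) C C) :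
    Set.MapsTo (fun c i => c (i - Fin.ofNat n (Nat.gcd n (orderOf θ)))) C C := by
  obtain ⟨k, hkr, hk0⟩ :=
    Nat.chineseRemainder' (Nat.modEq_zero_iff_dvd.2 dvd_rfl : n.gcd (orderOf θ) ≡ 0 [MOD _])
  have hθ : θ ^ k = 1 := orderOf_dvd_iff_pow_eq_one.1 (Nat.modEq_zero_iff_dvd.1 hk0)
  intro c hc
  simpa only [skewShift_iterate_of_pow_eq_one hθ, Fin.natCast_eq_natCast_of_modEq hkr,
    Fin.ofNat_eq_cast] using hC.iterate k hc

end SkewShift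

theorem skew_cyclic_is_quasicyclic_general {R : Type} [Ring R]
    (θ : RingAut R) {n r : ℕ} [NeZero n]
    (hr : r = Nat.gcd n (orderOf θ))
    (C : Submodule R (Fin n → R))
    (hC : ∀ c ∈ C, (fun i => θ (c (i - 1))) ∈ C) :
    (r = 1 → ∀ c ∈ C, (fun i => c (i - 1)) ∈ C) ∧
    (1 < r → ∀ c ∈ C, (fun i : Fin n => c (i - Fin.ofNat n r)) ∈ C) := by
  have hshift := mapsTo_shift_gcd_orderOf_of_mapsTo_skewShift (C := (C : Set (Fin n → R))) hC
  rw [← hr] at hshift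
  refine ⟨fun hr1 c hc => ?_, fun _ c hc => ?_⟩
  · rw [hr1, show Fin.ofNat n 1 = 1 from Fin.ext rfl] at hshift
    exact hshift hc
  · exact hshift hc

/-- Let `θ` be an automorphism of a finite ring `R` and `C` a `θ`-skew cyclic code of
length `n` over `R`, with `r = gcd(n, ord θ)` and `n = m·r`.  If `r = 1` then `C` is a
cyclic code; if `r > 1` then `C` is a quasi-cyclic code of index `m`, i.e. invariant
under the shift by `r` positions. -/
theorem skew_cyclic_is_quasicyclic {R : Type} [Ring R] [Fintype R]
    (θ : RingAut R) {n m r : ℕ} [NeZero n]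
    (hr : r = Nat.gcd n (orderOf θ)) (hnm : n = m * r)
    (C : Submodule R (Fin n → R))
    (hC : ∀ c ∈ C, (fun i => θ (c (i - 1))) ∈ C) :
    (r = 1 → ∀ c ∈ C, (fun i => c (i - 1)) ∈ C) ∧
    (1 < r → ∀ c ∈ C, (fun i : Fin n => c (i - Fin.ofNat n r)) ∈ C) :=
  skew_cyclic_is_quasicyclic_general θ hr C hC
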